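/- arXiv:math/0202225 — 6 statements merged into one kernel-verified Lean document; each statement's English description precedes it below -/
import Mathlib

section
/- Let X be a type, n a natural number, and let f, g : Fin n → (X → ℝ) be two families of real-valued functions on X such that the family (f₁, …, fₙ) is linearly independent in the real vector space of functions X → ℝ, and such that for all x, y ∈ X one has ∑_{k=1}^{n} f_k(x) · f_k(y) = ∑_{k=1}^{n} g_k(x) · g_k(y). Then there exists a real n × n orthogonal matrix A (i.e. Aᵀ A = I) such that for all j and all x ∈ X, g_j(x) = ∑_{k=1}^{n} A_{jk} f_k(x). -/
/-!
Linear independence of the `fₖ` yields sample points `p₁, …, pₙ` at which the matrix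
`M = (fₖ(pᵢ))` is invertible. With `N = (gₖ(pᵢ))`, the kernel identity gives `M Mᵀ = N Nᵀ` and
`M F(x) = N G(x)` for the value vectors `F(x) = (fₖ(x))ₖ`, `G(x) = (gₖ(x))ₖ`. Hence `Q = M⁻¹ N`
satisfies `Q Qᵀ = 1` and `Q G(x) = F(x)`, so `G(x) = Qᵀ F(x)` with `Qᵀ` orthogonal.
-/

open Finset Matrix

section

variable {K X ι : Type*} [Field K] [Fintype ι]

def sampleMatrix (f : ι → X → K) (p : ι → X) : Matrix ι ι K :=
  of fun i k ↦ f k (p i)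

theorem exists_isUnit_det_sampleMatrix [DecidableEq ι] {f : ι → X → K}
    (hf : LinearIndependent K f) : ∃ p : ι → X, IsUnit (sampleMatrix f p).det := by
  have hspan : ⊤ ≤ Submodule.span K (Set.range (flip f)) :=
    (span_flip_eq_top_iff_linearIndependent.mpr hf).ge
  let b := Module.Basis.ofSpan hspan
  let e := (Pi.basisFun K ι).indexEquiv b
  have hp : ∀ i, ∃ x, flip f x = b (e i) := fun i ↦ Module.Basis.ofSpan_subset hspan ⟨e i, rfl⟩
  choose p hp using hp
  refine ⟨p, (isUnit_iff_isUnit_det _).mp (linearIndependent_rows_iff_isUnit.mp ?_)⟩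
  have hrow : (sampleMatrix f p).row = b ∘ e := funext hp
  rw [hrow]
  exact b.linearIndependent.comp e e.injective

theorem sampleMatrix_mul_transpose_eq {f g : ι → X → K}
    (h : ∀ x y : X, ∑ k, f k x * f k y = ∑ k, g k x * g k y) (p : ι → X) :
    sampleMatrix f p * (sampleMatrix f p)ᵀ = sampleMatrix g p * (sampleMatrix g p)ᵀ := by
  ext i j
  exact h (p i) (p j)

theorem sampleMatrix_mulVec_eq {f g : ι → X → K}
    (h : ∀ x y : X, ∑ k, f k x * f k y = ∑ k, g k x * g k y) (p : ι → X) (x : X) :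
    sampleMatrix f p *ᵥ (fun k ↦ f k x) = sampleMatrix g p *ᵥ (fun k ↦ g k x) := by
  ext i
  exact h (p i) x

theorem nonsing_inv_mul_mul_transpose_eq_one [DecidableEq ι] {R : Type*} [CommRing R]
    {M N : Matrix ι ι R} (hM : IsUnit M.det) (h : M * Mᵀ = N * Nᵀ) :
    M⁻¹ * N * (M⁻¹ * N)ᵀ = 1 := by
  have hMt : IsUnit Mᵀ.det := by rwa [det_transpose]
  calc M⁻¹ * N * (M⁻¹ * N)ᵀ = M⁻¹ * (N * Nᵀ) * Mᵀ⁻¹ := by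
        rw [transpose_mul, transpose_nonsing_inv]; simp only [Matrix.mul_assoc]
    _ = M⁻¹ * M * (Mᵀ * Mᵀ⁻¹) := by rw [← h]; simp only [Matrix.mul_assoc]
    _ = 1 := by rw [nonsing_inv_mul _ hM, mul_nonsing_inv _ hMt, Matrix.one_mul]

end

/-- If two finite families of real-valued functions generate the same symmetric
kernel `∑ₖ fₖ(x) fₖ(y)` and the first family is linearly independent, then the
second family is obtained from the first by an orthogonal matrix. -/
theorem kernel_determines_family_up_to_orthogonal
    {X : Type*} (n : ℕ) (f g : Fin n → (X → ℝ))
    (hf : LinearIndependent ℝ f)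
    (h : ∀ x y : X, ∑ k, f k x * f k y = ∑ k, g k x * g k y) :
    ∃ A : Matrix (Fin n) (Fin n) ℝ, A.transpose * A = 1 ∧
      ∀ (j : Fin n) (x : X), g j x = ∑ k, A j k * f k x := by
  obtain ⟨p, hM⟩ := exists_isUnit_det_sampleMatrix hf
  set Q := (sampleMatrix f p)⁻¹ * sampleMatrix g p
  have hQ : Q * Qᵀ = 1 :=
    nonsing_inv_mul_mul_transpose_eq_one hM (sampleMatrix_mul_transpose_eq h p)
  refine ⟨Qᵀ, by rwa [transpose_transpose], fun j x ↦ ?_⟩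
  have hQg : Q *ᵥ (fun k ↦ g k x) = fun k ↦ f k x := by
    rw [← mulVec_mulVec, ← sampleMatrix_mulVec_eq h, mulVec_mulVec, nonsing_inv_mul _ hM,
      one_mulVec]
  calc g j x = ((Qᵀ * Q) *ᵥ fun k ↦ g k x) j := by rw [mul_eq_one_comm.mp hQ, one_mulVec]
    _ = ∑ k, Qᵀ j k * f k x := by rw [← mulVec_mulVec, hQg]; rfl
end

section
/- Let μ : ℕ → ℝ be an injective function with μ_l ≥ 0 for all l, and let c : ℕ → ℝ satisfy ∑_l |c_l| < ∞. If for every τ ∈ ℝ one has ∑_{l=0}^{∞} c_l · cos(μ_l τ) = 0, then c_l = 0 for every l. In other words, an absolutely convergent cosine series with distinct nonnegative frequencies is uniquely determined by its sum. -/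
/-!
Take the mean value `⨍ x in 0..T, ·` as `T → ∞` of the series multiplied by `cos (μ k x)`.
Since `cos (a x) cos (b x) = (cos ((a - b) x) + cos ((a + b) x)) / 2` and the mean of
`cos (a x)` tends to `1` if `a = 0` and to `0` otherwise, the term of index `l` has mean
`c l ([μ l = μ k] + [μ l + μ k = 0]) / 2`; absolute summability lets the mean pass through the
sum (dominated convergence, twice). Distinctness and nonnegativity of the frequencies kill every
term but `l = k`, leaving `c k (1 + [μ k = 0]) / 2 = 0`.
-/

open Real Filter Topology MeasureTheory

theorem tendsto_interval_average_cos (a : ℝ) :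
    Tendsto (fun T => ⨍ x in 0..T, cos (a * x)) atTop (𝓝 (if a = 0 then 1 else 0)) := by
  simp_rw [interval_average_eq, sub_zero, smul_eq_mul]
  split_ifs with ha
  · refine tendsto_const_nhds.congr' ?_
    filter_upwards [eventually_ne_atTop 0] with T hT
    simp [ha, hT]
  · have hint : ∀ T, ∫ x in 0..T, cos (a * x) = sin (a * T) / a := fun T => by
      simp [intervalIntegral.integral_comp_mul_left (fun x => cos x) ha, integral_cos,
        div_eq_inv_mul]
    simp_rw [hint]
    refine tendsto_inv_atTop_zero.zero_mul_isBoundedUnder_le ⟨|a|⁻¹, ?_⟩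
    refine eventually_map.2 (Eventually.of_forall fun T => ?_)
    simpa [abs_div, div_eq_mul_inv] using
      mul_le_mul_of_nonneg_right (abs_sin_le_one (a * T)) (inv_nonneg.2 (abs_nonneg a))

theorem tendsto_interval_average_cos_mul_cos (a b : ℝ) :
    Tendsto (fun T => ⨍ x in 0..T, cos (a * x) * cos (b * x)) atTop
      (𝓝 (((if a = b then 1 else 0) + (if a + b = 0 then 1 else 0)) / 2)) := by
  have hprod : ∀ x, cos (a * x) * cos (b * x) = (cos ((a - b) * x) + cos ((a + b) * x)) / 2 :=
    fun x => by rw [sub_mul, add_mul, cos_sub, cos_add]; ring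
  have hav : ∀ T, ⨍ x in 0..T, cos (a * x) * cos (b * x)
      = ((⨍ x in 0..T, cos ((a - b) * x)) + ⨍ x in 0..T, cos ((a + b) * x)) / 2 := fun T => by
    simp_rw [interval_average_eq_div, hprod, intervalIntegral.integral_div]
    rw [intervalIntegral.integral_add (by apply Continuous.intervalIntegrable; fun_prop)
      (by apply Continuous.intervalIntegrable; fun_prop)]
    ring
  simp_rw [hav, ← sub_eq_zero (a := a)]
  exact ((tendsto_interval_average_cos _).add (tendsto_interval_average_cos _)).div_const 2

theorem tendsto_interval_average_tsum {ι E : Type*} [Countable ι] [NormedAddCommGroup E]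
    [NormedSpace ℝ E] [CompleteSpace E] {F : ι → ℝ → E} {b : ι → ℝ} {L : ι → E}
    (hF : ∀ i, AEStronglyMeasurable (F i)) (hb : Summable b) (hFb : ∀ i x, ‖F i x‖ ≤ b i)
    (hL : ∀ i, Tendsto (fun T => ⨍ x in 0..T, F i x) atTop (𝓝 (L i))) :
    Tendsto (fun T => ⨍ x in 0..T, ∑' i, F i x) atTop (𝓝 (∑' i, L i)) := by
  have hsum : ∀ T, HasSum (fun i => ∫ x in 0..T, F i x) (∫ x in 0..T, ∑' i, F i x) := fun T =>
    intervalIntegral.hasSum_integral_of_dominated_convergence (fun i _ => b i)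
      (fun i => (hF i).restrict) (fun i => ae_of_all _ fun x _ => hFb i x)
      (ae_of_all _ fun _ _ => hb) intervalIntegrable_const
      (ae_of_all _ fun x _ => (hb.of_norm_bounded fun i => hFb i x).hasSum)
  have hav : ∀ T, ⨍ x in 0..T, ∑' i, F i x = ∑' i, ⨍ x in 0..T, F i x := fun T => by
    simp_rw [interval_average_eq]
    exact (((hsum T).const_smul _).tsum_eq).symm
  simp_rw [hav]
  refine tendsto_tsum_of_dominated_convergence hb hL ?_
  filter_upwards [eventually_gt_atTop 0] with T hT i
  rw [interval_average_eq, norm_smul, sub_zero, norm_inv, Real.norm_of_nonneg hT.le]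
  calc T⁻¹ * ‖∫ x in 0..T, F i x‖ ≤ T⁻¹ * (b i * |T - 0|) :=
        mul_le_mul_of_nonneg_left
          (intervalIntegral.norm_integral_le_of_norm_le_const fun x _ => hFb i x)
          (inv_nonneg.2 hT.le)
    _ = b i := by rw [sub_zero, abs_of_pos hT]; field_simp

/-- An absolutely convergent cosine series with pairwise distinct nonnegative
frequencies which vanishes identically has all coefficients zero. -/
theorem cosine_series_coeffs_unique (μ : ℕ → ℝ) (hμ : Function.Injective μ)
    (hμ0 : ∀ l, 0 ≤ μ l) (c : ℕ → ℝ) (hc : Summable fun l => |c l|)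
    (h : ∀ τ : ℝ, ∑' l, c l * Real.cos (μ l * τ) = 0) :
    ∀ l, c l = 0 := by
  intro k
  have hmean := tendsto_interval_average_tsum
    (F := fun l x => c l * (cos (μ l * x) * cos (μ k * x))) (b := fun l => |c l|)
    (fun l => by fun_prop) hc
    (fun l x => by
      simpa [abs_mul] using mul_le_of_le_one_right (abs_nonneg (c l))
        (mul_le_one₀ (abs_cos_le_one _) (abs_nonneg _) (abs_cos_le_one _)))
    (fun l => by
      simpa only [interval_average_eq, intervalIntegral.integral_const_mul, smul_eq_mul,
        mul_left_comm] using
        (tendsto_interval_average_cos_mul_cos (μ l) (μ k)).const_mul (c l))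
  have hzero : ∀ x, ∑' l, c l * (cos (μ l * x) * cos (μ k * x)) = 0 := fun x => by
    simp_rw [← mul_assoc, tsum_mul_right, h x, zero_mul]
  have hdiag : ∀ l ≠ k, c l * (((if μ l = μ k then 1 else 0) +
      (if μ l + μ k = 0 then 1 else 0)) / 2) = 0 := fun l hl => by
    have hne : μ l ≠ μ k := hμ.ne hl
    have hsum : μ l + μ k ≠ 0 := fun h0 => hne (by linarith [hμ0 l, hμ0 k])
    simp [hne, hsum]
  simp only [hzero, interval_average_eq, intervalIntegral.integral_zero, smul_zero,
    tsum_eq_single k hdiag, if_true] at hmean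
  have hlimit := tendsto_nhds_unique hmean tendsto_const_nhds
  have hfactor : (1 + if μ k + μ k = 0 then (1 : ℝ) else 0) / 2 ≠ 0 := by positivity
  exact (mul_eq_zero.1 hlimit).resolve_right hfactor
end

section
/- Let μ : ℕ → ℝ be an injective function with μ_l ≥ 0 for all l, let c : ℕ → ℝ satisfy ∑_l |c_l| < ∞, and set F(τ) = ∑_{l=0}^{∞} c_l · cos(μ_l τ). Then for every ν > 0, the Cesàro averages recover the coefficient of frequency ν: lim_{T → ∞} (1/T) ∫₀^T F(τ) cos(ντ) dτ = (1/2) · ∑_{l : μ_l = ν} c_l. In particular the limit equals c_{l₀}/2 if ν = μ_{l₀} for some l₀, and equals 0 if ν is not in the range of μ. -/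
/-!
Expand `F τ * cos (ν τ)` termwise: since `|c l · cos (μ_l τ) cos (ν τ)| ≤ |c l|` is
summable, the Cesàro mean of the series is the series of the Cesàro means, and dominated
convergence for series lets `T → ∞` pass through the sum. By
`cos x cos y = (cos (x - y) + cos (x + y)) / 2`, the mean of `cos (μ_l τ) cos (ν τ)` tends to
`1/2` when `μ_l = ν` and to `0` otherwise, since the mean of `cos (k τ)` is
`sin (k T) / (k T) → 0` for `k ≠ 0`; here `μ_l + ν > 0` is where the nonnegativity of the
frequencies enters.
-/

open MeasureTheory Filter Topology Real

noncomputable def cesaroMean (f : ℝ → ℝ) (T : ℝ) : ℝ :=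
  (1 / T) * ∫ τ in (0 : ℝ)..T, f τ

lemma abs_cesaroMean_le {f : ℝ → ℝ} {C T : ℝ} (hf : ∀ τ, |f τ| ≤ C) (hT : 0 < T) :
    |cesaroMean f T| ≤ C := by
  have hint : ‖∫ τ in (0 : ℝ)..T, f τ‖ ≤ C * |T - 0| :=
    intervalIntegral.norm_integral_le_of_norm_le_const fun τ _ => hf τ
  rw [sub_zero, abs_of_pos hT] at hint
  rw [cesaroMean, abs_mul, abs_of_pos (one_div_pos.mpr hT)]
  calc 1 / T * |∫ τ in (0 : ℝ)..T, f τ| ≤ 1 / T * (C * T) := by gcongr; exact hint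
    _ = C := by field_simp

lemma integral_cos_mul {k : ℝ} (hk : k ≠ 0) (T : ℝ) :
    ∫ τ in (0 : ℝ)..T, cos (k * τ) = sin (k * T) / k := by
  rw [intervalIntegral.integral_comp_mul_left (fun x => cos x) hk]
  simp [integral_cos, div_eq_inv_mul]

lemma tendsto_cesaroMean_cos (k : ℝ) :
    Tendsto (cesaroMean fun τ => cos (k * τ)) atTop (𝓝 (if k = 0 then 1 else 0)) := by
  by_cases hk : k = 0
  · refine tendsto_const_nhds.congr' ?_
    filter_upwards [eventually_gt_atTop 0] with T hT
    simp [cesaroMean, hk, hT.ne']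
  · rw [if_neg hk]
    refine squeeze_zero_norm' ?_ (by simpa using tendsto_inv_atTop_zero.const_mul |k|⁻¹)
    filter_upwards [eventually_gt_atTop 0] with T hT
    rw [cesaroMean, integral_cos_mul hk, Real.norm_eq_abs, abs_mul,
      abs_of_pos (one_div_pos.mpr hT), abs_div]
    calc 1 / T * (|sin (k * T)| / |k|) ≤ 1 / T * (1 / |k|) := by
          gcongr; exact abs_sin_le_one _
      _ = |k|⁻¹ * T⁻¹ := by ring

lemma cos_mul_cos_eq (x y : ℝ) : cos x * cos y = (cos (x - y) + cos (x + y)) / 2 := by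
  rw [cos_sub, cos_add]; ring

lemma cesaroMean_cos_mul_cos (a b T : ℝ) :
    cesaroMean (fun τ => cos (a * τ) * cos (b * τ)) T =
      (cesaroMean (fun τ => cos ((a - b) * τ)) T +
        cesaroMean (fun τ => cos ((a + b) * τ)) T) / 2 := by
  have hint (k : ℝ) : IntervalIntegrable (fun τ => cos (k * τ)) volume 0 T :=
    (by fun_prop : Continuous fun τ => cos (k * τ)).intervalIntegrable 0 T
  have hprod : (fun τ => cos (a * τ) * cos (b * τ)) =
      fun τ => (cos ((a - b) * τ) + cos ((a + b) * τ)) / 2 := by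
    funext τ; rw [cos_mul_cos_eq, sub_mul, add_mul]
  simp only [cesaroMean, hprod, intervalIntegral.integral_div,
    intervalIntegral.integral_add (hint _) (hint _)]
  ring

lemma tendsto_cesaroMean_cos_mul_cos {a b : ℝ} (hab : a + b ≠ 0) :
    Tendsto (cesaroMean fun τ => cos (a * τ) * cos (b * τ)) atTop
      (𝓝 (if a = b then 1 / 2 else 0)) := by
  rw [show cesaroMean (fun τ => cos (a * τ) * cos (b * τ)) = _ from
    funext (cesaroMean_cos_mul_cos a b)]
  convert ((tendsto_cesaroMean_cos (a - b)).add (tendsto_cesaroMean_cos (a + b))).div_const 2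
    using 2
  simp only [sub_eq_zero, if_neg hab, add_zero]
  split_ifs <;> norm_num

section Series

variable {ι : Type*} [Countable ι] {c : ι → ℝ} {f : ι → ℝ → ℝ}

lemma cesaroMean_tsum (hc : Summable fun l => |c l|) (hf_meas : ∀ l, Measurable (f l))
    (hf_le : ∀ l τ, |f l τ| ≤ 1) (T : ℝ) :
    cesaroMean (fun τ => ∑' l, c l * f l τ) T = ∑' l, c l * cesaroMean (f l) T := by
  have hterm_le (l : ι) (τ : ℝ) : ‖c l * f l τ‖ ≤ |c l| := by
    rw [Real.norm_eq_abs, abs_mul]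
    exact mul_le_of_le_one_right (abs_nonneg _) (hf_le l τ)
  have hswap : HasSum (fun l => ∫ τ in (0 : ℝ)..T, c l * f l τ)
      (∫ τ in (0 : ℝ)..T, ∑' l, c l * f l τ) :=
    intervalIntegral.hasSum_integral_of_dominated_convergence (fun l _ => |c l|)
      (fun l => ((hf_meas l).const_mul (c l)).aestronglyMeasurable)
      (fun l => ae_of_all _ fun τ _ => hterm_le l τ)
      (ae_of_all _ fun _ _ => hc) intervalIntegrable_const
      (ae_of_all _ fun τ _ => (hc.of_norm_bounded (hterm_le · τ)).hasSum)
  rw [cesaroMean, ← hswap.tsum_eq, ← tsum_mul_left]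
  congr 1 with l
  rw [cesaroMean, intervalIntegral.integral_const_mul]
  ring

lemma tendsto_cesaroMean_tsum (hc : Summable fun l => |c l|) (hf_meas : ∀ l, Measurable (f l))
    (hf_le : ∀ l τ, |f l τ| ≤ 1) {L : ι → ℝ}
    (hf_lim : ∀ l, Tendsto (cesaroMean (f l)) atTop (𝓝 (L l))) :
    Tendsto (cesaroMean fun τ => ∑' l, c l * f l τ) atTop (𝓝 (∑' l, c l * L l)) := by
  rw [funext (cesaroMean_tsum hc hf_meas hf_le)]
  refine tendsto_tsum_of_dominated_convergence hc (fun l => (hf_lim l).const_mul (c l)) ?_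
  filter_upwards [eventually_gt_atTop 0] with T hT l
  rw [Real.norm_eq_abs, abs_mul]
  exact mul_le_of_le_one_right (abs_nonneg _) (abs_cesaroMean_le (hf_le l) hT)

end Series

lemma tsum_mul_ite_eq_mul_tsum_subtype {ι : Type*} (c : ι → ℝ) (p : ι → Prop)
    [DecidablePred p] (a : ℝ) :
    ∑' l, c l * (if p l then a else 0) = a * ∑' l : {l // p l}, c l := by
  rw [show (∑' l : {l // p l}, c l) = ∑' l : ({l | p l} : Set ι), c l from rfl, tsum_subtype,
    ← tsum_mul_left]
  congr 1 with l
  by_cases hl : p l <;> simp [hl, mul_comm]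

theorem cosine_series_cesaro_recovers_coeff_general (μ : ℕ → ℝ)
    (hμ0 : ∀ l, 0 ≤ μ l) (c : ℕ → ℝ) (hc : Summable fun l => |c l|)
    (F : ℝ → ℝ) (hF : ∀ τ, F τ = ∑' l, c l * Real.cos (μ l * τ)) :
    ∀ ν : ℝ, 0 < ν →
      Tendsto (fun T : ℝ => (1 / T) * ∫ τ in (0 : ℝ)..T, F τ * Real.cos (ν * τ))
        atTop (nhds ((1 / 2) * ∑' l : {l : ℕ // μ l = ν}, c l)) := by
  intro ν hν
  have hexpand : (fun τ => F τ * cos (ν * τ)) =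
      fun τ => ∑' l, c l * (cos (μ l * τ) * cos (ν * τ)) := by
    funext τ
    simp only [hF, ← tsum_mul_right, mul_assoc]
  have hlim := tendsto_cesaroMean_tsum hc (f := fun l τ => cos (μ l * τ) * cos (ν * τ))
    (fun l => by fun_prop)
    (fun l τ => by
      rw [abs_mul]; exact mul_le_one₀ (abs_cos_le_one _) (abs_nonneg _) (abs_cos_le_one _))
    (fun l => tendsto_cesaroMean_cos_mul_cos (by linarith [hμ0 l] : 0 < μ l + ν).ne')
  rw [tsum_mul_ite_eq_mul_tsum_subtype, ← hexpand] at hlim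
  exact hlim

/-- Cesàro averages against `cos (ν τ)` recover the coefficient of frequency `ν`
in an absolutely convergent cosine series with pairwise distinct nonnegative
frequencies. -/
theorem cosine_series_cesaro_recovers_coeff (μ : ℕ → ℝ) (hμ : Function.Injective μ)
    (hμ0 : ∀ l, 0 ≤ μ l) (c : ℕ → ℝ) (hc : Summable fun l => |c l|)
    (F : ℝ → ℝ) (hF : ∀ τ, F τ = ∑' l, c l * Real.cos (μ l * τ)) :
    ∀ ν : ℝ, 0 < ν →
      Tendsto (fun T : ℝ => (1 / T) * ∫ τ in (0 : ℝ)..T, F τ * Real.cos (ν * τ))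
        atTop (nhds ((1 / 2) * ∑' l : {l : ℕ // μ l = ν}, c l)) :=
  cosine_series_cesaro_recovers_coeff_general μ hμ0 c hc F hF
end

section
/- Let λ : ℕ → ℝ be strictly increasing and let c : ℕ → ℝ be such that for every τ > 0 the series ∑_l |c_l| e^{−λ_l τ} converges. If ∑_{l=0}^{∞} c_l e^{−λ_l τ} = 0 for all τ > 0, then c_l = 0 for every l. In other words, a generalized Dirichlet series with strictly increasing real exponents, absolutely convergent for every τ > 0, is uniquely determined by its sum on (0, ∞). -/
/-!
If `c k = 0` for `k < n`, multiplying the series by `exp (λₙ τ)` leaves terms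
`c l * exp (-(λₗ - λₙ) τ)` with nonnegative rates, dominated for `τ ≥ 1` by their values at
`τ = 1`; by dominated convergence the product tends to `c n` as `τ → ∞`. Since the series
vanishes identically, `c n = 0`, and strong induction on `n` finishes.
-/

open Filter Topology Real

theorem tendsto_exp_neg_mul_atTop_of_pos {a : ℝ} (ha : 0 < a) :
    Tendsto (fun τ : ℝ => exp (-a * τ)) atTop (𝓝 0) :=
  tendsto_exp_comp_nhds_zero.2 <| tendsto_id.const_mul_atTop_of_neg (neg_neg_of_pos ha)

theorem tendsto_exp_mul_tsum_mul_exp_neg_mul {lam c : ℕ → ℝ} (hlam : StrictMono lam) {τ₀ : ℝ}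
    (hc : Summable fun l => |c l| * exp (-(lam l) * τ₀)) {n : ℕ} (hzero : ∀ k < n, c k = 0) :
    Tendsto (fun τ => exp (lam n * τ) * ∑' l, c l * exp (-(lam l) * τ)) atTop (𝓝 (c n)) := by
  have hshift : ∀ τ x l, exp (lam n * τ) * (x * exp (-(lam l) * τ))
      = x * exp (-(lam l - lam n) * τ) := fun τ x l => by
    rw [mul_left_comm, ← exp_add]; ring_nf
  simp_rw [← tsum_mul_left, hshift]
  rw [← tsum_ite_eq n c]
  refine tendsto_tsum_of_dominated_convergence
    (bound := fun l => |c l| * exp (-(lam l - lam n) * τ₀))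
    ((hc.mul_left (exp (lam n * τ₀))).congr fun l => hshift τ₀ |c l| l) (fun l => ?_) ?_
  · rcases lt_trichotomy l n with hl | rfl | hl
    · simp [hzero l hl, hl.ne]
    · simp
    · simpa [hl.ne'] using
        (tendsto_exp_neg_mul_atTop_of_pos (sub_pos.2 (hlam hl))).const_mul (c l)
  · filter_upwards [eventually_ge_atTop τ₀] with τ hτ l
    rcases lt_or_ge l n with hl | hl
    · simp [hzero l hl]
    rw [norm_mul, norm_eq_abs, norm_of_nonneg (exp_pos _).le]
    have hrate : 0 ≤ lam l - lam n := sub_nonneg.2 (hlam.monotone hl)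
    exact mul_le_mul_of_nonneg_left (exp_le_exp.2 (by nlinarith)) (abs_nonneg _)

/-- A generalized Dirichlet series with strictly increasing real exponents,
absolutely convergent for every `τ > 0`, which vanishes for all `τ > 0`,
has all coefficients zero. -/
theorem dirichlet_series_coeffs_unique (lam : ℕ → ℝ) (hlam : StrictMono lam)
    (c : ℕ → ℝ)
    (hc : ∀ τ : ℝ, 0 < τ → Summable fun l => |c l| * Real.exp (-(lam l) * τ))
    (h : ∀ τ : ℝ, 0 < τ → ∑' l, c l * Real.exp (-(lam l) * τ) = 0) :
    ∀ l, c l = 0 := by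
  intro n
  induction n using Nat.strong_induction_on with
  | _ n ih =>
    refine tendsto_nhds_unique (tendsto_exp_mul_tsum_mul_exp_neg_mul hlam (hc 1 one_pos) ih) ?_
    refine tendsto_const_nhds.congr' ?_
    filter_upwards [eventually_gt_atTop 0] with τ hτ
    rw [h τ hτ, mul_zero]
end

section
/- Let λ : ℕ → ℝ be strictly increasing and let c : ℕ → ℝ be such that for every τ > 0 the series ∑_l |c_l| e^{−λ_l τ} converges. Then the leading coefficient is recovered from the large-time asymptotics: lim_{τ → ∞} e^{λ_0 τ} · ∑_{l=0}^{∞} c_l e^{−λ_l τ} = c_0. -/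
/-! Factoring out `e^{λ₀τ}` leaves `∑ c_l e^{-(λ_l - λ₀)τ}`, whose exponents are nonnegative and
vanish only at `l = 0`. For `τ ≥ 1` its terms are dominated by those of the absolutely convergent
series at `τ = 1`, so by Tannery's theorem the limit may be taken termwise, and only `c₀` survives. -/

open Filter Real Topology

theorem tendsto_exp_neg_mul_atTop_ite {m : ℝ} (hm : 0 ≤ m) :
    Tendsto (fun τ => exp (-m * τ)) atTop (𝓝 (if m = 0 then 1 else 0)) := by
  split_ifs with h
  · simp [h]
  · exact tendsto_exp_atBot.comp <|
      tendsto_id.const_mul_atTop_of_neg (neg_neg_of_pos (lt_of_le_of_ne hm (Ne.symm h)))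

theorem tendsto_tsum_mul_exp_neg_mul_atTop {ι : Type*} {a μ : ι → ℝ} (hμ : ∀ i, 0 ≤ μ i)
    {τ₀ : ℝ} (hsum : Summable fun i => |a i| * exp (-μ i * τ₀)) :
    Tendsto (fun τ => ∑' i, a i * exp (-μ i * τ)) atTop
      (𝓝 (∑' i, if μ i = 0 then a i else 0)) := by
  refine tendsto_tsum_of_dominated_convergence hsum (fun i => ?_) ?_
  · simpa only [mul_ite, mul_one, mul_zero] using
      (tendsto_exp_neg_mul_atTop_ite (hμ i)).const_mul (a i)
  · filter_upwards [eventually_ge_atTop τ₀] with τ hτ i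
    rw [norm_mul, norm_of_nonneg (exp_pos _).le, Real.norm_eq_abs]
    exact mul_le_mul_of_nonneg_left (exp_le_exp.2 (by nlinarith [hμ i])) (abs_nonneg _)

theorem exp_mul_mul_exp_neg_mul (a b x τ : ℝ) :
    exp (a * τ) * (x * exp (-b * τ)) = x * exp (-(b - a) * τ) := by
  rw [mul_left_comm, ← exp_add]
  ring_nf

theorem exp_mul_tsum_mul_exp_neg_mul {ι : Type*} (a : ℝ) (c μ : ι → ℝ) (τ : ℝ) :
    exp (a * τ) * ∑' i, c i * exp (-(μ i) * τ) = ∑' i, c i * exp (-(μ i - a) * τ) := by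
  simp only [← tsum_mul_left, exp_mul_mul_exp_neg_mul]

/-- For a generalized Dirichlet series with strictly increasing exponents,
absolutely convergent for every `τ > 0`, the leading coefficient is recovered
from the large-time asymptotics. -/
theorem dirichlet_series_leading_coeff (lam : ℕ → ℝ) (hlam : StrictMono lam)
    (c : ℕ → ℝ)
    (hc : ∀ τ : ℝ, 0 < τ → Summable fun l => |c l| * Real.exp (-(lam l) * τ)) :
    Tendsto (fun τ : ℝ =>
        Real.exp (lam 0 * τ) * ∑' l, c l * Real.exp (-(lam l) * τ))
      atTop (nhds (c 0)) := by
  have hshift_nonneg : ∀ l, 0 ≤ lam l - lam 0 := fun l => sub_nonneg.2 (hlam.monotone l.zero_le)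
  have hsum : Summable fun l => |c l| * exp (-(lam l - lam 0) * 1) :=
    ((hc 1 one_pos).mul_left (exp (lam 0 * 1))).congr fun l =>
      exp_mul_mul_exp_neg_mul _ _ _ _
  have hlimit : (∑' l, if lam l - lam 0 = 0 then c l else 0) = c 0 := by
    refine (tsum_eq_single 0 fun l hl => if_neg ?_).trans (if_pos (sub_self _))
    exact sub_ne_zero.2 (hlam.injective.ne hl)
  simpa only [exp_mul_tsum_mul_exp_neg_mul, hlimit] using
    tendsto_tsum_mul_exp_neg_mul_atTop hshift_nonneg hsum
end

section
/- Let λ : ℕ → ℝ and let c : ℕ → ℂ be such that for every ε > 0 the series ∑_l |c_l| e^{−λ_l ε} converges, and set F(z) = ∑_{l=0}^{∞} c_l e^{−λ_l z} on the half-plane {Re z > 0}. If there exist real numbers 0 < a < b such that F(t) = 0 for all real t ∈ (a, b), then F(z) = 0 for all z ∈ ℂ with Re z > 0. Consequently, knowledge of such a generalized Dirichlet series on a finite time interval determines it on all of (0, ∞). -/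
/-!
On every vertical strip `ε < Re z < R` with `0 < ε` the terms of the series are dominated by
`‖c l‖ (e^{-λ_l ε} + e^{-λ_l R})`, which is summable, so the series converges locally uniformly
and defines a holomorphic function on the right half-plane. That function vanishes on a real
interval, so by the identity theorem it vanishes on the (connected) half-plane.
-/

open Complex Filter Set Topology

noncomputable def dirichletSeries (lam : ℕ → ℝ) (c : ℕ → ℂ) (z : ℂ) : ℂ :=
  ∑' l, c l * cexp (-(lam l : ℂ) * z)

lemma norm_mul_cexp_neg_ofReal_mul (c : ℂ) (r : ℝ) (w : ℂ) :
    ‖c * cexp (-(r : ℂ) * w)‖ = ‖c‖ * Real.exp (-r * w.re) := by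
  simp [Complex.norm_exp, Complex.mul_re]

lemma Real.exp_neg_mul_le_add_of_mem_Icc {r x ε R : ℝ} (hx : x ∈ Icc ε R) :
    Real.exp (-r * x) ≤ Real.exp (-r * ε) + Real.exp (-r * R) := by
  rcases le_total 0 r with hr | hr
  · have : Real.exp (-r * x) ≤ Real.exp (-r * ε) := Real.exp_le_exp.mpr (by nlinarith [hx.1])
    linarith [Real.exp_pos (-r * R)]
  · have : Real.exp (-r * x) ≤ Real.exp (-r * R) := Real.exp_le_exp.mpr (by nlinarith [hx.2])
    linarith [Real.exp_pos (-r * ε)]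

lemma differentiableOn_dirichletSeries_strip {lam : ℕ → ℝ} {c : ℕ → ℂ} {ε R : ℝ}
    (hε : Summable fun l => ‖c l‖ * Real.exp (-(lam l) * ε))
    (hR : Summable fun l => ‖c l‖ * Real.exp (-(lam l) * R)) :
    DifferentiableOn ℂ (dirichletSeries lam c) (re ⁻¹' Ioo ε R) := by
  refine differentiableOn_tsum_of_summable_norm (hε.add hR)
    (fun l => Differentiable.differentiableOn (by fun_prop))
    (isOpen_Ioo.preimage continuous_re) fun l w hw => ?_
  rw [norm_mul_cexp_neg_ofReal_mul, ← mul_add]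
  exact mul_le_mul_of_nonneg_left
    (Real.exp_neg_mul_le_add_of_mem_Icc (Ioo_subset_Icc_self hw)) (norm_nonneg _)

lemma analyticOnNhd_dirichletSeries {lam : ℕ → ℝ} {c : ℕ → ℂ}
    (hc : ∀ ε : ℝ, 0 < ε → Summable fun l => ‖c l‖ * Real.exp (-(lam l) * ε)) :
    AnalyticOnNhd ℂ (dirichletSeries lam c) (re ⁻¹' Ioi 0) := by
  refine DifferentiableOn.analyticOnNhd (fun z (hz : 0 < z.re) => ?_)
    (isOpen_Ioi.preimage continuous_re)
  have hstrip : re ⁻¹' Ioo (z.re / 2) (z.re + 1) ∈ 𝓝 z :=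
    (isOpen_Ioo.preimage continuous_re).mem_nhds ⟨by linarith, by linarith⟩
  exact (differentiableOn_dirichletSeries_strip (hc _ (by linarith))
    (hc _ (by linarith))).differentiableAt hstrip |>.differentiableWithinAt

theorem AnalyticOnNhd.eqOn_zero_of_eventually_eq_zero_ofReal {E : Type*} [NormedAddCommGroup E]
    [NormedSpace ℂ E] {f : ℂ → E} {U : Set ℂ} (hf : AnalyticOnNhd ℂ f U) (hU : IsPreconnected U)
    {x : ℝ} (hx : (x : ℂ) ∈ U) (h0 : ∀ᶠ t : ℝ in 𝓝 x, f t = 0) : EqOn f 0 U := by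
  have hofReal : Tendsto ((↑) : ℝ → ℂ) (𝓝[≠] x) (𝓝[≠] (x : ℂ)) :=
    continuous_ofReal.continuousWithinAt.tendsto_nhdsWithin fun _ _ ↦ by simp_all
  exact hf.eqOn_zero_of_preconnected_of_frequently_eq_zero hU hx
    (hofReal.frequently (eventually_nhdsWithin_of_eventually_nhds h0).frequently)

/-- A generalized Dirichlet series which converges absolutely on every vertical
line `Re z = ε > 0` and vanishes on a real interval `(a, b) ⊆ (0, ∞)` vanishes
on the whole open right half-plane. -/
theorem dirichlet_series_unique_continuation (lam : ℕ → ℝ) (c : ℕ → ℂ)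
    (hc : ∀ ε : ℝ, 0 < ε → Summable fun l => ‖c l‖ * Real.exp (-(lam l) * ε))
    (F : ℂ → ℂ) (hF : ∀ z : ℂ, 0 < z.re →
      F z = ∑' l, c l * Complex.exp (-(lam l : ℂ) * z))
    (a b : ℝ) (ha : 0 < a) (hab : a < b)
    (hzero : ∀ t : ℝ, t ∈ Set.Ioo a b → F (t : ℂ) = 0) :
    ∀ z : ℂ, 0 < z.re → F z = 0 := by
  have hmid : (a + b) / 2 ∈ Ioo a b := ⟨by linarith, by linarith⟩
  have hzero' : ∀ᶠ t : ℝ in 𝓝 ((a + b) / 2), dirichletSeries lam c t = 0 :=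
    eventually_of_mem (Ioo_mem_nhds hmid.1 hmid.2) fun t ht =>
      (hF t (by simp only [ofReal_re]; linarith [ht.1])).symm.trans (hzero t ht)
  have hvanish := (analyticOnNhd_dirichletSeries hc).eqOn_zero_of_eventually_eq_zero_ofReal
    (convex_halfSpace_re_gt 0).isPreconnected
    (show (0 : ℝ) < ((a + b) / 2 : ℝ) by linarith) hzero'
  intro z hz
  rw [hF z hz]
  exact hvanish hz
end
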